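/- arXiv:2002.11005 — 4 statements merged into one kernel-verified Lean document; each statement's English description precedes it below -/
import Mathlib

section
/- Let F : ℝ^d → ℝ be a differentiable function whose gradient is Lipschitz continuous with constant L > 0, which is c-strongly convex for some 0 < c ≤ L, and which attains its minimum value F*. Fix w ∈ ℝ^d and a step size η with 0 < η ≤ 1/L. Let g be an ℝ^d-valued random vector with E[g] = ∇F(w) and E[‖g − ∇F(w)‖²] ≤ v for some v ≥ 0. Then E[F(w − ηg)] − F* ≤ (1 − ηc)(F(w) − F*) + η² L v / 2. -/
open MeasureTheory ProbabilityTheory RealInnerProductSpace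

/-! The descent lemma bounds `F (w - η • g)` by the quadratic model
`F w - η ⟪∇F w, g⟫ + L η² / 2 ‖g‖²`. Taking expectations, unbiasedness and the bias–variance
split `E ‖g‖² = ‖∇F w‖² + E ‖g - ∇F w‖²` give
`E F (w - η • g) ≤ F w - η (1 - L η / 2) ‖∇F w‖² + L η² v / 2`. Since `L η ≤ 1` the coefficient
of `‖∇F w‖²` is at most `-η / 2`, and the Polyak–Łojasiewicz inequality
`2 c (F w - F*) ≤ ‖∇F w‖²` finishes. Strong convexity at `w` also dominates `‖g‖²` by an integrable
function, so the variance integral is a genuine one and not a junk value. -/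

section

variable {E : Type*} [NormedAddCommGroup E] [InnerProductSpace ℝ E]

theorem two_mul_sub_le_norm_sq_of_quadratic_minorant {F : E → ℝ} {c : ℝ} (hc : 0 < c)
    {x p : E} (hF : ∀ y, F x + ⟪p, y - x⟫ + c / 2 * ‖y - x‖ ^ 2 ≤ F y) (y : E) :
    2 * c * (F x - F y) ≤ ‖p‖ ^ 2 := by
  have hsq : 0 ≤ ‖p + c • (y - x)‖ ^ 2 := sq_nonneg _
  rw [norm_add_sq_real, inner_smul_right, norm_smul, Real.norm_of_nonneg hc.le] at hsq
  nlinarith [mul_le_mul_of_nonneg_left (hF y) hc.le]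

variable {Ω : Type*} [MeasurableSpace Ω] {μ : Measure Ω}

theorem integrable_norm_sq_of_quadratic_minorant [IsFiniteMeasure μ] {F : E → ℝ} {c η : ℝ}
    (hc : 0 < c) (hη : η ≠ 0) {w p : E}
    (hF : ∀ y, F w + ⟪p, y - w⟫ + c / 2 * ‖y - w‖ ^ 2 ≤ F y) {g : Ω → E}
    (hg : Integrable g μ) (hFg : Integrable (fun ω => F (w - η • g ω)) μ) :
    Integrable (fun ω => ‖g ω‖ ^ 2) μ := by
  have hbound (ω : Ω) :
      ‖g ω‖ ^ 2 ≤ 2 / (c * η ^ 2) * (F (w - η • g ω) - F w + η * ⟪p, g ω⟫) := by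
    have h := hF (w - η • g ω)
    rw [sub_sub_cancel_left, inner_neg_right, inner_smul_right, norm_neg, norm_smul,
      mul_pow, Real.norm_eq_abs, sq_abs] at h
    rw [div_mul_eq_mul_div, le_div_iff₀ (by positivity)]
    linarith
  refine Integrable.mono'
    (g := fun ω => 2 / (c * η ^ 2) * (F (w - η • g ω) - F w + η * ⟪p, g ω⟫))
    (((hFg.sub (integrable_const (F w))).add ((hg.const_inner p).const_mul η)).const_mul _)
    (hg.aestronglyMeasurable.norm.pow 2) (ae_of_all _ fun ω => ?_)
  rw [Real.norm_of_nonneg (sq_nonneg _)]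
  exact hbound ω

variable [CompleteSpace E]

theorem le_add_inner_add_norm_sq_of_lipschitz_gradient {F : E → ℝ} {L : ℝ}
    (hF : Differentiable ℝ F) (hLip : ∀ x y, ‖gradient F x - gradient F y‖ ≤ L * ‖x - y‖)
    (x y : E) :
    F y ≤ F x + ⟪gradient F x, y - x⟫ + L / 2 * ‖y - x‖ ^ 2 := by
  set u := y - x
  let φ : ℝ → ℝ := fun t => F (x + t • u) - t * ⟪gradient F x, u⟫ - L / 2 * t ^ 2 * ‖u‖ ^ 2
  have hφ (t : ℝ) :
      HasDerivAt φ (⟪gradient F (x + t • u) - gradient F x, u⟫ - L * t * ‖u‖ ^ 2) t := by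
    have hline : HasDerivAt (fun s : ℝ => x + s • u) u t := by
      simpa using ((hasDerivAt_id t).smul_const u).const_add x
    have hF_line : HasDerivAt (fun s : ℝ => F (x + s • u)) ⟪gradient F (x + t • u), u⟫ t := by
      simpa [Function.comp_def] using
        (hF _).hasGradientAt.hasFDerivAt.comp_hasDerivAt t hline
    refine ((hF_line.fun_sub ((hasDerivAt_id' t).mul_const ⟪gradient F x, u⟫)).fun_sub
      (((hasDerivAt_pow 2 t).const_mul (L / 2)).mul_const (‖u‖ ^ 2))).congr_deriv ?_
    rw [inner_sub_left]
    push_cast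
    ring
  have hanti : AntitoneOn φ (Set.Ici 0) := by
    refine antitoneOn_of_hasDerivWithinAt_nonpos (convex_Ici 0)
      (fun t _ => (hφ t).continuousAt.continuousWithinAt)
      (fun t _ => (hφ t).hasDerivWithinAt) fun t ht => ?_
    rw [interior_Ici] at ht
    have hgrad : ‖gradient F (x + t • u) - gradient F x‖ ≤ L * t * ‖u‖ := by
      simpa [norm_smul, abs_of_pos (Set.mem_Ioi.mp ht), mul_assoc] using hLip (x + t • u) x
    nlinarith [real_inner_le_norm (gradient F (x + t • u) - gradient F x) u,
      mul_le_mul_of_nonneg_right hgrad (norm_nonneg u)]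
  have h01 := hanti Set.self_mem_Ici (Set.mem_Ici.mpr zero_le_one) zero_le_one
  simp only [φ, u, zero_smul, add_zero, zero_mul, sub_zero, one_smul, one_mul, add_sub_cancel,
    one_pow] at h01
  linarith

theorem integral_norm_sub_integral_sq [IsProbabilityMeasure μ] {g : Ω → E}
    (hg : Integrable g μ) (hg2 : Integrable (fun ω => ‖g ω‖ ^ 2) μ) :
    ∫ ω, ‖g ω - ∫ ω', g ω' ∂μ‖ ^ 2 ∂μ = ∫ ω, ‖g ω‖ ^ 2 ∂μ - ‖∫ ω, g ω ∂μ‖ ^ 2 := by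
  set m := ∫ ω, g ω ∂μ
  have hinner : Integrable (fun ω => 2 * ⟪m, g ω⟫) μ := (hg.const_inner m).const_mul 2
  simp_rw [norm_sub_rev _ m, norm_sub_sq_real]
  rw [integral_add (by exact (integrable_const _).sub hinner) hg2,
    integral_sub (integrable_const _) hinner, integral_const_mul, integral_inner hg,
    real_inner_self_eq_norm_sq]
  simp only [integral_const, probReal_univ, smul_eq_mul, one_mul]
  ring

end

theorem sgd_one_step_contraction_general
    {d : ℕ} {Ω : Type*} [MeasurableSpace Ω] (μ : Measure Ω) [IsProbabilityMeasure μ]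
    (F : EuclideanSpace ℝ (Fin d) → ℝ) (Fstar : ℝ)
    (L c : ℝ) (hL : 0 < L) (hc : 0 < c)
    (hF : Differentiable ℝ F)
    (hLip : ∀ x y, ‖gradient F x - gradient F y‖ ≤ L * ‖x - y‖)
    (hStrong : ∀ x y, F x + ⟪gradient F x, y - x⟫ + c / 2 * ‖y - x‖ ^ 2 ≤ F y)
    (hattain : ∃ x, F x = Fstar)
    (w : EuclideanSpace ℝ (Fin d))
    (η : ℝ) (hη : 0 < η) (hηL : η ≤ 1 / L)
    (g : Ω → EuclideanSpace ℝ (Fin d)) (hgint : Integrable g μ)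
    (hgmean : ∫ ω, g ω ∂μ = gradient F w)
    (v : ℝ)
    (hgvar : ∫ ω, ‖g ω - gradient F w‖ ^ 2 ∂μ ≤ v)
    (hFint : Integrable (fun ω => F (w - η • g ω)) μ) :
    (∫ ω, F (w - η • g ω) ∂μ) - Fstar ≤
      (1 - η * c) * (F w - Fstar) + η ^ 2 * L * v / 2 := by
  obtain ⟨xstar, rfl⟩ := hattain
  set p := gradient F w
  have hPL : 2 * c * (F w - F xstar) ≤ ‖p‖ ^ 2 :=
    two_mul_sub_le_norm_sq_of_quadratic_minorant hc (hStrong w) xstar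
  have hg2 : Integrable (fun ω => ‖g ω‖ ^ 2) μ :=
    integrable_norm_sq_of_quadratic_minorant hc hη.ne' (hStrong w) hgint hFint
  have hstep (ω : Ω) : F (w - η • g ω) ≤ F w - η * ⟪p, g ω⟫ + L * η ^ 2 / 2 * ‖g ω‖ ^ 2 := by
    have h := le_add_inner_add_norm_sq_of_lipschitz_gradient hF hLip w (w - η • g ω)
    rw [sub_sub_cancel_left, inner_neg_right, inner_smul_right, norm_neg, norm_smul,
      mul_pow, Real.norm_eq_abs, sq_abs] at h
    linarith
  have hlin : Integrable (fun ω => F w - η * ⟪p, g ω⟫) μ :=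
    (integrable_const _).sub ((hgint.const_inner p).const_mul η)
  have hexp : ∫ ω, F (w - η • g ω) ∂μ ≤
      F w - η * ‖p‖ ^ 2 + L * η ^ 2 / 2 * ∫ ω, ‖g ω‖ ^ 2 ∂μ := by
    refine (integral_mono hFint (by exact hlin.add (hg2.const_mul _)) hstep).trans_eq ?_
    rw [integral_add hlin (hg2.const_mul _),
      integral_sub (integrable_const _) ((hgint.const_inner p).const_mul η), integral_const_mul,
      integral_const_mul, integral_inner hgint, hgmean, real_inner_self_eq_norm_sq]
    simp only [integral_const, probReal_univ, smul_eq_mul, one_mul]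
  have hvar : L * η ^ 2 / 2 * (∫ ω, ‖g ω‖ ^ 2 ∂μ - ‖p‖ ^ 2) ≤ L * η ^ 2 / 2 * v := by
    rw [← hgmean, ← integral_norm_sub_integral_sq hgint hg2, hgmean]
    gcongr
  have hLη : L * η ≤ 1 := by rwa [le_div_iff₀ hL, mul_comm] at hηL
  have hsmall : L * η * (η * ‖p‖ ^ 2) ≤ η * ‖p‖ ^ 2 := mul_le_of_le_one_left (by positivity) hLη
  linarith [mul_le_mul_of_nonneg_left hPL hη.le]

/-- One-step expected contraction lemma for SGD with fixed step size and an
unbiased stochastic gradient of variance at most v. -/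
theorem sgd_one_step_contraction
    {d : ℕ} {Ω : Type*} [MeasurableSpace Ω] (μ : Measure Ω) [IsProbabilityMeasure μ]
    (F : EuclideanSpace ℝ (Fin d) → ℝ) (Fstar : ℝ)
    (L c : ℝ) (hL : 0 < L) (hc : 0 < c) (hcL : c ≤ L)
    (hF : Differentiable ℝ F)
    (hLip : ∀ x y, ‖gradient F x - gradient F y‖ ≤ L * ‖x - y‖)
    (hStrong : ∀ x y, F x + ⟪gradient F x, y - x⟫ + c / 2 * ‖y - x‖ ^ 2 ≤ F y)
    (hmin : ∀ x, Fstar ≤ F x) (hattain : ∃ x, F x = Fstar)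
    (w : EuclideanSpace ℝ (Fin d))
    (η : ℝ) (hη : 0 < η) (hηL : η ≤ 1 / L)
    (g : Ω → EuclideanSpace ℝ (Fin d)) (hgmeas : Measurable g) (hgint : Integrable g μ)
    (hgmean : ∫ ω, g ω ∂μ = gradient F w)
    (v : ℝ) (hv : 0 ≤ v)
    (hgvar : ∫ ω, ‖g ω - gradient F w‖ ^ 2 ∂μ ≤ v)
    (hFint : Integrable (fun ω => F (w - η • g ω)) μ) :
    (∫ ω, F (w - η • g ω) ∂μ) - Fstar ≤
      (1 - η * c) * (F w - Fstar) + η ^ 2 * L * v / 2 :=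
  sgd_one_step_contraction_general μ F Fstar L c hL hc hF hLip hStrong hattain w η hη hηL g hgint
    hgmean v hgvar hFint
end

section
/- Let X_1, X_2, … be independent and identically distributed strictly positive random variables with mean μ > 0 and finite variance v, let S_m = Σ_{i=1}^m X_i (with S_0 = 0), and define the renewal counting process J(t) = sup{m ≥ 0 : S_m ≤ t}. Fix ε ∈ (0,1). Then there exists T > 0 such that for all t ≥ T, P( J(t) < (t/μ)(1 − ε) ) ≤ (v/ε²) · (2/(tμ) + 1/t²). -/
/-!
If `S_n ≤ t` then at least `n` renewals have happened by time `t`, so the event `J(t) < n` is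
contained in `t < S_n` as soon as the supremum defining `J(t)` is attained, which holds almost
surely because `S_n → ∞` by the strong law. With `n = ⌈(t / μ)(1 - ε)⌉`, Chebyshev's inequality
bounds `P(t < S_n)` by `n v / (t - n μ)²`, and the gap `t - n μ ≥ ε t - μ` is large enough once
`ε t ≥ 6 μ`.
-/

open MeasureTheory ProbabilityTheory Filter Finset

/-- The renewal counting process: the number of completed renewals by time t, i.e.
the largest m with S_m = X_1 + … + X_m ≤ t. -/
noncomputable def renewalCount {Ω : Type*} (X : ℕ → Ω → ℝ) (t : ℝ) (ω : Ω) : ℕ :=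
  sSup {m : ℕ | ∑ i ∈ Finset.range m, X i ω ≤ t}

theorem tendsto_sum_range_atTop_of_tendsto_avg {f : ℕ → ℝ} {c : ℝ} (hc : 0 < c)
    (hf : Tendsto (fun n : ℕ => (∑ i ∈ range n, f i) / n) atTop (nhds c)) :
    Tendsto (fun n => ∑ i ∈ range n, f i) atTop atTop := by
  refine (hf.pos_mul_atTop hc tendsto_natCast_atTop_atTop).congr' ?_
  filter_upwards [eventually_ne_atTop 0] with n hn
  field_simp

theorem le_renewalCount {Ω : Type*} {X : ℕ → Ω → ℝ} {t : ℝ} {ω : Ω} {m : ℕ}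
    (htend : Tendsto (fun n => ∑ i ∈ range n, X i ω) atTop atTop)
    (hm : ∑ i ∈ range m, X i ω ≤ t) :
    m ≤ renewalCount X t ω := by
  obtain ⟨N, hN⟩ := (htend.eventually_gt_atTop t).exists_forall_of_atTop
  have hbdd : BddAbove {m : ℕ | ∑ i ∈ range m, X i ω ≤ t} :=
    ⟨N, fun k hk => le_of_not_ge fun hNk => (hN k hNk).not_ge hk⟩
  exact le_csSup hbdd hm

section

variable {Ω : Type*} [MeasurableSpace Ω] {μ : Measure Ω} {X : ℕ → Ω → ℝ}

theorem ae_tendsto_sum_range_atTop (hint : Integrable (X 0) μ)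
    (hindep : Pairwise fun i j => IndepFun (X i) (X j) μ)
    (hident : ∀ i, IdentDistrib (X i) (X 0) μ μ) (hmean : 0 < μ[X 0]) :
    ∀ᵐ ω ∂μ, Tendsto (fun n => ∑ i ∈ range n, X i ω) atTop atTop := by
  filter_upwards [strong_law_ae_real X hint hindep hident] with ω hω
  exact tendsto_sum_range_atTop_of_tendsto_avg hmean hω

theorem measure_renewalCount_lt_le (t : ℝ) (n : ℕ)
    (htend : ∀ᵐ ω ∂μ, Tendsto (fun n => ∑ i ∈ range n, X i ω) atTop atTop) :
    μ {ω | renewalCount X t ω < n} ≤ μ {ω | t < ∑ i ∈ range n, X i ω} := by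
  refine measure_mono_ae ?_
  filter_upwards [htend] with ω hω hlt
  exact lt_of_not_ge fun hle => (le_renewalCount hω hle).not_gt hlt

theorem measure_lt_sum_range_le [IsFiniteMeasure μ] {a v t : ℝ} (n : ℕ)
    (hL2 : ∀ i, MemLp (X i) 2 μ) (hindep : Pairwise fun i j => IndepFun (X i) (X j) μ)
    (hmean : ∀ i, μ[X i] = a) (hvar : ∀ i, variance (X i) μ = v) (ht : n * a < t) :
    μ {ω | t < ∑ i ∈ range n, X i ω} ≤ ENNReal.ofReal (n * v / (t - n * a) ^ 2) := by
  set S := ∑ i ∈ range n, X i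
  have hS : ∀ ω, S ω = ∑ i ∈ range n, X i ω := fun ω => Finset.sum_apply ω _ _
  have hSmean : μ[S] = n * a := by
    simp only [S, Finset.sum_apply]
    rw [integral_finsetSum _ fun i _ => (hL2 i).integrable one_le_two]
    simp [hmean]
  have hSvar : variance S μ = n * v := by
    rw [IndepFun.variance_sum (fun i _ => hL2 i) fun i _ j _ hij => hindep hij]
    simp [hvar]
  calc μ {ω | t < ∑ i ∈ range n, X i ω}
      ≤ μ {ω | t - n * a ≤ |S ω - μ[S]|} := by
        refine measure_mono fun ω (hω : t < _) => ?_
        change t - n * a ≤ |S ω - μ[S]|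
        rw [hSmean, hS]
        exact (sub_le_sub_right hω.le _).trans (le_abs_self _)
    _ ≤ ENNReal.ofReal (n * v / (t - n * a) ^ 2) := by
        rw [← hSvar]
        exact meas_ge_le_variance_div_sq (memLp_finsetSum' _ fun i _ => hL2 i) (by linarith)

end

theorem chebyshev_renewal_bound_le {a ε t v n : ℝ} (ha : 0 < a) (hε0 : 0 < ε) (hv : 0 ≤ v)
    (ht : 6 * a ≤ ε * t) (hn : n * a ≤ (1 - ε) * t + a) :
    n * v / (t - n * a) ^ 2 ≤ v / ε ^ 2 * (2 / (t * a) + 1 / t ^ 2) := by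
  have ht0 : 0 < t := by nlinarith
  have hgap : ε * t - a ≤ t - n * a := by linarith
  have hgap0 : 0 < ε * t - a := by linarith
  have hpoly : n * a * (ε ^ 2 * t ^ 2) ≤ (2 * t + a) * (t - n * a) ^ 2 :=
    calc n * a * (ε ^ 2 * t ^ 2) ≤ ((1 - ε) * t + a) * (ε ^ 2 * t ^ 2) := by gcongr
      _ ≤ (2 * t + a) * (ε * t - a) ^ 2 := by
        nlinarith [mul_le_mul_of_nonneg_left ht (by positivity : 0 ≤ ε * t ^ 2),
          mul_pos ht0 ha, pow_pos ha 3, mul_pos (mul_pos ht0 ha) ha]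
      _ ≤ (2 * t + a) * (t - n * a) ^ 2 := by gcongr
  have hrhs : v / ε ^ 2 * (2 / (t * a) + 1 / t ^ 2) = v * (2 * t + a) / (a * (ε ^ 2 * t ^ 2)) := by
    field_simp
  rw [hrhs, div_le_div_iff₀ (pow_pos (hgap0.trans_le hgap) 2) (by positivity)]
  nlinarith [mul_le_mul_of_nonneg_left hpoly hv]

theorem renewal_count_lower_tail_general
    {Ω : Type*} [MeasurableSpace Ω] (μ : Measure Ω) [IsProbabilityMeasure μ]
    (X : ℕ → Ω → ℝ) (hmeas : ∀ i, Measurable (X i))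
    (hindep : iIndepFun X μ)
    (hident : ∀ i, Measure.map (X i) μ = Measure.map (X 0) μ)
    (m_ v : ℝ) (hm_ : 0 < m_) (hL2 : ∀ i, MemLp (X i) 2 μ)
    (hmean : ∀ i, ∫ ω, X i ω ∂μ = m_)
    (hvar : ∀ i, variance (X i) μ = v)
    (ε : ℝ) (hε0 : 0 < ε) (hε1 : ε < 1) :
    ∃ T > (0 : ℝ), ∀ t ≥ T,
      (μ {ω | ((renewalCount X t ω : ℝ)) < t / m_ * (1 - ε)}).toReal ≤
        v / ε ^ 2 * (2 / (t * m_) + 1 / t ^ 2) := by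
  have hpair : Pairwise fun i j => IndepFun (X i) (X j) μ := fun i j hij => hindep.indepFun hij
  have htend : ∀ᵐ ω ∂μ, Tendsto (fun n => ∑ i ∈ range n, X i ω) atTop atTop :=
    ae_tendsto_sum_range_atTop ((hL2 0).integrable one_le_two) hpair
      (fun i => ⟨(hmeas i).aemeasurable, (hmeas 0).aemeasurable, hident i⟩) (hmean 0 ▸ hm_)
  refine ⟨6 * m_ / ε, by positivity, fun t ht => ?_⟩
  have hεt : 6 * m_ ≤ ε * t := by rw [ge_iff_le, div_le_iff₀ hε0] at ht; linarith
  have hx0 : 0 ≤ t / m_ * (1 - ε) := by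
    have : 0 ≤ t := by nlinarith
    have : 0 ≤ 1 - ε := by linarith
    positivity
  set n := ⌈t / m_ * (1 - ε)⌉₊
  have hn : (n : ℝ) * m_ ≤ (1 - ε) * t + m_ := by
    have := (Nat.ceil_lt_add_one hx0).le
    calc (n : ℝ) * m_ ≤ (t / m_ * (1 - ε) + 1) * m_ := by gcongr
      _ = (1 - ε) * t + m_ := by field_simp
  have hv : 0 ≤ v := hvar 0 ▸ variance_nonneg _ _
  calc (μ {ω | (renewalCount X t ω : ℝ) < t / m_ * (1 - ε)}).toReal
      ≤ (μ {ω | t < ∑ i ∈ range n, X i ω}).toReal := by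
        refine ENNReal.toReal_mono (measure_ne_top _ _)
          ((measure_mono fun ω hω => Nat.lt_ceil.2 hω).trans
            (measure_renewalCount_lt_le t n htend))
    _ ≤ n * v / (t - n * m_) ^ 2 :=
        ENNReal.toReal_le_of_le_ofReal (by positivity)
          (measure_lt_sum_range_le n hL2 hpair hmean hvar (by linarith))
    _ ≤ v / ε ^ 2 * (2 / (t * m_) + 1 / t ^ 2) :=
        chebyshev_renewal_bound_le hm_ hε0 hv hεt hn

/-- High-probability lower bound on the renewal counting process: for iid strictly
positive inter-renewal times with mean m_ and variance v, and ε ∈ (0,1), for all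
large enough t, P(J(t) < (t/m_)(1 − ε)) ≤ (v/ε²)(2/(t m_) + 1/t²). -/
theorem renewal_count_lower_tail
    {Ω : Type*} [MeasurableSpace Ω] (μ : Measure Ω) [IsProbabilityMeasure μ]
    (X : ℕ → Ω → ℝ) (hmeas : ∀ i, Measurable (X i))
    (hindep : iIndepFun X μ)
    (hident : ∀ i, Measure.map (X i) μ = Measure.map (X 0) μ)
    (hpos : ∀ i, ∀ᵐ ω ∂μ, 0 < X i ω)
    (m_ v : ℝ) (hm_ : 0 < m_) (hL2 : ∀ i, MemLp (X i) 2 μ)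
    (hmean : ∀ i, ∫ ω, X i ω ∂μ = m_)
    (hvar : ∀ i, variance (X i) μ = v)
    (ε : ℝ) (hε0 : 0 < ε) (hε1 : ε < 1) :
    ∃ T > (0 : ℝ), ∀ t ≥ T,
      (μ {ω | ((renewalCount X t ω : ℝ)) < t / m_ * (1 - ε)}).toReal ≤
        v / ε ^ 2 * (2 / (t * m_) + 1 / t ^ 2) :=
  renewal_count_lower_tail_general μ X hmeas hindep hident m_ v hm_ hL2 hmean hvar ε hε0 hε1
end

section
/- Let ρ ∈ (0,1), let 0 < μ₁ < μ₂, let 0 ≤ a₂ < a₁ < E be real numbers, and assume (μ₂ − μ₁)(E − a₁) > μ₁(a₁ − a₂). Define f : [0,∞) → ℝ by f(t) = a₁ + ρ^{t/μ₁}(E − a₁). Then t* = (μ₁ / (−ln ρ)) · ln( (μ₂ − μ₁)(E − a₁) / (μ₁ (a₁ − a₂)) ) is strictly positive and is the unique t ≥ 0 satisfying f′(t) = (ln ρ / μ₂) · ( f(t) − a₂ ); that is, t* is the unique time at which the instantaneous decrease rate of the curve f equals the initial decrease rate of the curve t ↦ a₂ + ρ^{(t − t*)/μ₂}( f(t*)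 − a₂ ) obtained by restarting with floor a₂ and time constant μ₂ from the current value f(t*). -/
/-- Analytic core of the bound-optimal switching policy: for the error-bound curve
f(t) = a₁ + ρ^{t/μ₁}(E − a₁), the time t* = (μ₁/(−ln ρ)) ln((μ₂−μ₁)(E−a₁)/(μ₁(a₁−a₂)))
is strictly positive and is the unique t ≥ 0 at which the instantaneous decrease rate
of f equals the initial decrease rate of the restarted curve with floor a₂ and time
constant μ₂, i.e. f′(t) = (ln ρ / μ₂)(f(t) − a₂). -/
theorem bound_optimal_switch_time
    (ρ μ₁ μ₂ a₁ a₂ E : ℝ) (hρ0 : 0 < ρ) (hρ1 : ρ < 1)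
    (hμ₁ : 0 < μ₁) (hμ₁₂ : μ₁ < μ₂)
    (ha₂ : 0 ≤ a₂) (ha₁₂ : a₂ < a₁) (haE : a₁ < E)
    (hgap : μ₁ * (a₁ - a₂) < (μ₂ - μ₁) * (E - a₁))
    (f : ℝ → ℝ) (hf : f = fun t => a₁ + ρ ^ (t / μ₁) * (E - a₁))
    (tstar : ℝ)
    (htstar : tstar = μ₁ / (-Real.log ρ) *
        Real.log ((μ₂ - μ₁) * (E - a₁) / (μ₁ * (a₁ - a₂)))) :
    0 < tstar ∧
      ∀ t : ℝ, 0 ≤ t →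
        (deriv f t = Real.log ρ / μ₂ * (f t - a₂) ↔ t = tstar) := by
  subst hf
  have hL : Real.log ρ < 0 := Real.log_neg hρ0 hρ1
  set L := Real.log ρ with hLdef
  have hLne : L ≠ 0 := ne_of_lt hL
  have hμ₂ : (0:ℝ) < μ₂ := lt_trans hμ₁ hμ₁₂
  have hc : 0 < μ₁ * (a₁ - a₂) := mul_pos hμ₁ (by linarith)
  have hd : 0 < (μ₂ - μ₁) * (E - a₁) := mul_pos (by linarith) (by linarith)
  have hratio : 1 < (μ₂ - μ₁) * (E - a₁) / (μ₁ * (a₁ - a₂)) :=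
    (one_lt_div hc).2 hgap
  have hlogpos : 0 < Real.log ((μ₂ - μ₁) * (E - a₁) / (μ₁ * (a₁ - a₂))) :=
    Real.log_pos hratio
  constructor
  · rw [htstar]
    exact mul_pos (div_pos hμ₁ (by linarith)) hlogpos
  · intro t _
    have hderiv : deriv (fun t => a₁ + ρ ^ (t / μ₁) * (E - a₁)) t
        = ρ ^ (t / μ₁) * L * (1 / μ₁) * (E - a₁) := by
      have h1 : HasDerivAt (fun x : ℝ => x / μ₁) (1 / μ₁) t :=
        (hasDerivAt_id t).div_const μ₁
      have h2 : HasDerivAt (fun y : ℝ => ρ ^ y) (ρ ^ (t / μ₁) * L) (t / μ₁) :=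
        (Real.hasStrictDerivAt_const_rpow hρ0 (t / μ₁)).hasDerivAt
      have h4 := ((h2.comp t h1).mul_const (E - a₁)).const_add a₁
      exact h4.deriv
    rw [hderiv]
    set X := ρ ^ (t / μ₁) with hX
    have hXexp : X = Real.exp (L * (t / μ₁)) := Real.rpow_def_of_pos hρ0 _
    have key : (X * L * (1 / μ₁) * (E - a₁)
          = L / μ₂ * (a₁ + X * (E - a₁) - a₂))
        ↔ X = μ₁ * (a₁ - a₂) / ((μ₂ - μ₁) * (E - a₁)) := by
      rw [eq_div_iff hd.ne']
      constructor
      · intro h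
        field_simp at h
        nlinarith [h]
      · intro h
        field_simp
        nlinarith [h]
    rw [key, hXexp]
    rw [show μ₁ * (a₁ - a₂) / ((μ₂ - μ₁) * (E - a₁))
        = Real.exp (Real.log (μ₁ * (a₁ - a₂) / ((μ₂ - μ₁) * (E - a₁)))) from
      (Real.exp_log (div_pos hc hd)).symm]
    rw [Real.exp_eq_exp]
    have hlogflip : Real.log (μ₁ * (a₁ - a₂) / ((μ₂ - μ₁) * (E - a₁)))
        = - Real.log ((μ₂ - μ₁) * (E - a₁) / (μ₁ * (a₁ - a₂))) := by
      rw [← Real.log_inv]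
      congr 1
      field_simp
    rw [hlogflip]
    rw [htstar, div_mul_eq_mul_div, eq_div_iff (neg_ne_zero.mpr hLne),
      mul_comm L (t / μ₁), div_mul_eq_mul_div, div_eq_iff hμ₁.ne']
    constructor <;> intro h <;> linear_combination -h
end

section
/- Let η, L, σ², c, s > 0 with ηc < 1, let k ≥ 1 be an integer, let 0 < μ_k < μ_{k+1}, and set a_k = ηLσ²/(2cks), a_{k+1} = ηLσ²/(2c(k+1)s), and ρ = 1 − ηc. Let E be a real number with E > a_k and (μ_{k+1} − μ_k)(E − a_k) > μ_k (a_k − a_{k+1}), and let t_{k−1} ≥ 0. Define t_k = t_{k−1} + (μ_k / (−ln(1 − ηc))) · [ ln(μ_{k+1} − μ_k) − ln(ηLσ²μ_k) + ln( 2ck(k+1)sE − ηL(k+1)σ² ) ]. Then: (i) ln(μ_{k+1} − μ_k) − ln(ηLσ²μ_k) + ln(2ck(k+1)sE − ηL(k+1)σ²) = ln( (μ_{k+1} − μ_k)(E − a_k) / (μ_k (a_k − a_{k+1})) ); and (ii) t_k is the unique t > t_{k−1} at which the function f(t) = a_k + ρ^{(t − t_{k−1})/μ_k}(E − a_k) satisfies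 f′(t) = (ln ρ / μ_{k+1}) ( f(t) − a_{k+1} ). -/
/-!
The bound `f` is an exponential decay towards the floor `a`, so `f' = (log ρ / μ) (f - a)`.
Matching this rate with `(log ρ / μ') (f - a')` is a linear equation in `ρ ^ ((t - t₀) / μ)`,
whose unique solution `μ (a - a') / ((μ' - μ) (E - a))` lies in `(0, 1)` under the gap
condition; taking `logb ρ` gives the switching time, which is after `t₀` because `0 < ρ < 1`.
The logarithmic identity is the observation that `2ck(k+1)s` times both `E - a_k` and
`μ_k (a_k - a_{k+1})` gives the two arguments of the logarithms in the closed form.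
-/

open Real

noncomputable def decayBound (a E ρ t₀ μ t : ℝ) : ℝ :=
  a + ρ ^ ((t - t₀) / μ) * (E - a)

section DecayBound

variable {a a' E ρ t₀ μ μ' : ℝ}

theorem hasDerivAt_decayBound (hρ : 0 < ρ) (t : ℝ) :
    HasDerivAt (decayBound a E ρ t₀ μ) (log ρ / μ * (decayBound a E ρ t₀ μ t - a)) t := by
  have hexp : HasDerivAt (fun t => (t - t₀) / μ) (1 / μ) t :=
    ((hasDerivAt_id t).sub_const t₀).div_const μ
  refine ((((hasStrictDerivAt_const_rpow hρ _).hasDerivAt.comp t hexp).mul_const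
    (E - a)).const_add a).congr_deriv ?_
  simp only [decayBound]
  ring

theorem decayBound_rate_eq_iff (hρ : log ρ ≠ 0) (hμ : μ ≠ 0) (hμ' : μ' ≠ 0) (hμμ' : μ ≠ μ')
    (hE : E ≠ a) (t : ℝ) :
    log ρ / μ * (decayBound a E ρ t₀ μ t - a) = log ρ / μ' * (decayBound a E ρ t₀ μ t - a') ↔
      ρ ^ ((t - t₀) / μ) = μ * (a - a') / ((μ' - μ) * (E - a)) := by
  have hμ'μ : μ' - μ ≠ 0 := sub_ne_zero.2 hμμ'.symm
  have hEa : E - a ≠ 0 := sub_ne_zero.2 hE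
  rw [eq_div_iff (mul_ne_zero hμ'μ hEa), decayBound, div_mul_eq_mul_div, div_mul_eq_mul_div,
    div_eq_div_iff hμ hμ']
  constructor <;> intro h
  · exact mul_left_cancel₀ hρ (by linear_combination h)
  · linear_combination log ρ * h

theorem deriv_decayBound_eq_iff (hρ₀ : 0 < ρ) (hρ₁ : ρ ≠ 1) (hμ : 0 < μ) (hμμ' : μ < μ')
    (ha : a' < a) (hE : a < E) (t : ℝ) :
    deriv (decayBound a E ρ t₀ μ) t = log ρ / μ' * (decayBound a E ρ t₀ μ t - a') ↔
      t = t₀ + μ / -log ρ * log ((μ' - μ) * (E - a) / (μ * (a - a'))) := by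
  have hlogρ : log ρ ≠ 0 := log_ne_zero_of_pos_of_ne_one hρ₀ hρ₁
  have hratio : 0 < μ * (a - a') / ((μ' - μ) * (E - a)) := by
    apply div_pos <;> apply mul_pos <;> linarith
  rw [(hasDerivAt_decayBound hρ₀ t).deriv,
    decayBound_rate_eq_iff hlogρ hμ.ne' (by linarith) hμμ'.ne hE.ne' t,
    ← logb_eq_iff_rpow_eq hρ₀ hρ₁ hratio, logb, ← inv_div ((μ' - μ) * (E - a)), log_inv,
    div_eq_div_iff hlogρ hμ.ne', eq_comm]
  have hneg : -log ρ ≠ 0 := neg_ne_zero.2 hlogρ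
  constructor <;> intro h
  · rw [div_mul_eq_mul_div, ← sub_eq_iff_eq_add', eq_div_iff hneg]
    linear_combination -h
  · rw [h]
    field_simp
    ring

end DecayBound

theorem div_sub_div_succ (q c s k : ℝ) (hc : c ≠ 0) (hs : s ≠ 0) (hk : k ≠ 0) (hk' : k + 1 ≠ 0) :
    q / (2 * c * k * s) - q / (2 * c * (k + 1) * s) = q / (2 * c * k * (k + 1) * s) := by
  field_simp
  ring

theorem log_sub_log_mul_add_log_mul {m x y C : ℝ} (hm : 0 < m) (hx : 0 < x) (hy : 0 < y)
    (hC : 0 < C) : log m - log (C * y) + log (C * x) = log (m * x / y) := by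
  rw [log_mul hC.ne' hy.ne', log_mul hC.ne' hx.ne', log_div (by positivity) hy.ne',
    log_mul hm.ne' hx.ne']
  ring

theorem bound_optimal_policy_general
    (η L σ2 c s : ℝ) (hη : 0 < η) (hL : 0 < L) (hσ2 : 0 < σ2) (hc : 0 < c) (hs : 0 < s)
    (hηc : η * c < 1)
    (k : ℕ) (hk : 1 ≤ k)
    (μk μk1 : ℝ) (hμk : 0 < μk) (hμ : μk < μk1)
    (ak ak1 ρ : ℝ)
    (hak : ak = η * L * σ2 / (2 * c * k * s))
    (hak1 : ak1 = η * L * σ2 / (2 * c * (k + 1) * s))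
    (hρ : ρ = 1 - η * c)
    (E tkm1 : ℝ) (hE : ak < E)
    (hgap : μk * (ak - ak1) < (μk1 - μk) * (E - ak))
    (tk : ℝ)
    (htk : tk = tkm1 + μk / (-Real.log (1 - η * c)) *
        (Real.log (μk1 - μk) - Real.log (η * L * σ2 * μk) +
          Real.log (2 * c * k * (k + 1) * s * E - η * L * (k + 1) * σ2)))
    (f : ℝ → ℝ) (hf : f = fun t => ak + ρ ^ ((t - tkm1) / μk) * (E - ak)) :
    (Real.log (μk1 - μk) - Real.log (η * L * σ2 * μk) +
        Real.log (2 * c * k * (k + 1) * s * E - η * L * (k + 1) * σ2) =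
      Real.log ((μk1 - μk) * (E - ak) / (μk * (ak - ak1)))) ∧
    tkm1 < tk ∧
    ∀ t : ℝ, tkm1 < t →
      (deriv f t = Real.log ρ / μk1 * (f t - ak1) ↔ t = tk) := by
  have hk₀ : (0 : ℝ) < k := by exact_mod_cast hk
  have hρ₀ : 0 < ρ := by linarith
  have hρ₁ : ρ < 1 := by nlinarith [mul_pos hη hc]
  have hC : 0 < 2 * c * k * (k + 1) * s := by positivity
  have hfloor : ak - ak1 = η * L * σ2 / (2 * c * k * (k + 1) * s) := by
    rw [hak, hak1]
    exact div_sub_div_succ _ _ _ _ hc.ne' hs.ne' hk₀.ne' (by positivity)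
  have hak_lt : ak1 < ak := by linarith [show 0 < ak - ak1 by rw [hfloor]; positivity]
  have hnum : 2 * c * k * (k + 1) * s * E - η * L * (k + 1) * σ2 =
      2 * c * k * (k + 1) * s * (E - ak) := by
    rw [hak]; field_simp
  have hden : η * L * σ2 * μk = 2 * c * k * (k + 1) * s * (μk * (ak - ak1)) := by
    rw [hfloor]; field_simp
  have hlog : log (μk1 - μk) - log (η * L * σ2 * μk) +
      log (2 * c * k * (k + 1) * s * E - η * L * (k + 1) * σ2) =
        log ((μk1 - μk) * (E - ak) / (μk * (ak - ak1))) := by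
    rw [hnum, hden]
    exact log_sub_log_mul_add_log_mul (sub_pos.2 hμ) (sub_pos.2 hE)
      (mul_pos hμk (sub_pos.2 hak_lt)) hC
  refine ⟨hlog, ?_, fun t _ => ?_⟩
  · rw [htk, hlog, ← hρ]
    exact lt_add_of_pos_right _ <| mul_pos (div_pos hμk (neg_pos.2 (log_neg hρ₀ hρ₁)))
      (log_pos ((one_lt_div (mul_pos hμk (sub_pos.2 hak_lt))).2 hgap))
  · rw [hf, htk, hlog, ← hρ]
    exact deriv_decayBound_eq_iff hρ₀ hρ₁.ne hμk hμ hak_lt hE t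

/-- Theorem 2 (bound-optimal policy for adaptive fastest-k SGD): with error floors
a_k = ηLσ²/(2cks), a_{k+1} = ηLσ²/(2c(k+1)s) and ρ = 1 − ηc, the switching time
t_k = t_{k−1} + (μ_k/(−ln(1−ηc)))[ln(μ_{k+1}−μ_k) − ln(ηLσ²μ_k) + ln(2ck(k+1)sE − ηL(k+1)σ²)]
satisfies the stated logarithm identity and is the unique time t > t_{k−1} at which the
decrease rate of the current bound f equals the initial decrease rate of the switched bound. -/
theorem bound_optimal_policy
    (η L σ2 c s : ℝ) (hη : 0 < η) (hL : 0 < L) (hσ2 : 0 < σ2) (hc : 0 < c) (hs : 0 < s)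
    (hηc : η * c < 1)
    (k : ℕ) (hk : 1 ≤ k)
    (μk μk1 : ℝ) (hμk : 0 < μk) (hμ : μk < μk1)
    (ak ak1 ρ : ℝ)
    (hak : ak = η * L * σ2 / (2 * c * k * s))
    (hak1 : ak1 = η * L * σ2 / (2 * c * (k + 1) * s))
    (hρ : ρ = 1 - η * c)
    (E tkm1 : ℝ) (hE : ak < E) (htkm1 : 0 ≤ tkm1)
    (hgap : μk * (ak - ak1) < (μk1 - μk) * (E - ak))
    (tk : ℝ)
    (htk : tk = tkm1 + μk / (-Real.log (1 - η * c)) *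
        (Real.log (μk1 - μk) - Real.log (η * L * σ2 * μk) +
          Real.log (2 * c * k * (k + 1) * s * E - η * L * (k + 1) * σ2)))
    (f : ℝ → ℝ) (hf : f = fun t => ak + ρ ^ ((t - tkm1) / μk) * (E - ak)) :
    (Real.log (μk1 - μk) - Real.log (η * L * σ2 * μk) +
        Real.log (2 * c * k * (k + 1) * s * E - η * L * (k + 1) * σ2) =
      Real.log ((μk1 - μk) * (E - ak) / (μk * (ak - ak1)))) ∧
    tkm1 < tk ∧
    ∀ t : ℝ, tkm1 < t →
      (deriv f t = Real.log ρ / μk1 * (f t - ak1) ↔ t = tk) :=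
  bound_optimal_policy_general η L σ2 c s hη hL hσ2 hc hs hηc k hk μk μk1 hμk hμ ak ak1 ρ hak hak1
    hρ E tkm1 hE hgap tk htk f hf
end
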